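/- Let g be a real Lie algebra with an abelian complex structure J and a J-invariant pluriclosed inner product (i.e. g([y,z],[w,x]) - g([x,z],[w,y]) + g([x,y],[w,z]) = 0 for all x,y,z,w). If [x,Jx] = 0 and [y,Jy] = 0, then [x,y] = 0 and [x,Jy] = 0. -/

import Mathlib

/-! Apply the pluriclosed identity to `(x, y, Jy, Jx)`. Since `[y, Jy] = 0`, and since an abelian
complex structure satisfies `[Jx, y] = -[x, Jy]` and `[Jx, Jy] = [x, y]`, it collapses to
`g([x,y],[x,y]) + g([x,Jy],[x,Jy]) = 0`; positivity of `g` forces both brackets to vanish. -/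

section

variable {R L : Type*} [CommRing R] [LieRing L] [LieAlgebra R L]

theorem lie_apply_left_eq_neg_lie_apply_right (J : L → L) (hJ2 : ∀ x, J (J x) = -x)
    (hab : ∀ x y, ⁅J x, J y⁆ = ⁅x, y⁆) (x y : L) : ⁅J x, y⁆ = -⁅x, J y⁆ := by
  rw [← hab x (J y), hJ2, lie_neg, neg_neg]

theorem pluriclosed_apply_lie_self_add_apply_lie_apply_self_eq_zero (J : L → L)
    (hJ2 : ∀ x, J (J x) = -x) (hab : ∀ x y, ⁅J x, J y⁆ = ⁅x, y⁆) (g : L →ₗ[R] L →ₗ[R] R)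
    (hpc : ∀ x y z w : L, g ⁅y, z⁆ ⁅w, x⁆ - g ⁅x, z⁆ ⁅w, y⁆ + g ⁅x, y⁆ ⁅w, z⁆ = 0)
    {x y : L} (hy : ⁅y, J y⁆ = 0) :
    g ⁅x, y⁆ ⁅x, y⁆ + g ⁅x, J y⁆ ⁅x, J y⁆ = 0 := by
  have h := hpc x y (J y) (J x)
  rw [hy, lie_apply_left_eq_neg_lie_apply_right J hJ2 hab x y, hab] at h
  simp only [map_zero, LinearMap.zero_apply, map_neg] at h
  linear_combination h

end

theorem LinearMap.eq_zero_and_eq_zero_of_apply_self_add_apply_self_eq_zero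
    {R M : Type*} [CommRing R] [LinearOrder R] [IsStrictOrderedRing R]
    [AddCommGroup M] [Module R M] (g : M →ₗ[R] M →ₗ[R] R)
    (hpos : ∀ x : M, x ≠ 0 → 0 < g x x) {u v : M} (h : g u u + g v v = 0) :
    u = 0 ∧ v = 0 := by
  have nonneg (w : M) : 0 ≤ g w w := by
    rcases eq_or_ne w 0 with rfl | hw
    · simp
    · exact (hpos w hw).le
  have eq_zero (w : M) (hw : g w w = 0) : w = 0 := by_contra fun hne => (hpos w hne).ne' hw
  exact ⟨eq_zero u (by linarith [nonneg u, nonneg v]), eq_zero v (by linarith [nonneg u, nonneg v])⟩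

theorem bracket_vanishing_of_degenerate_general
    {L : Type*} [LieRing L] [LieAlgebra ℝ L]
    (J : L →ₗ[ℝ] L)
    (hJ2 : ∀ x : L, J (J x) = -x)
    (hab : ∀ x y : L, ⁅J x, J y⁆ = ⁅x, y⁆)
    (g : L →ₗ[ℝ] L →ₗ[ℝ] ℝ)
    (hpos : ∀ x : L, x ≠ 0 → 0 < g x x)
    (hpc : ∀ x y z w : L, g ⁅y, z⁆ ⁅w, x⁆ - g ⁅x, z⁆ ⁅w, y⁆ + g ⁅x, y⁆ ⁅w, z⁆ = 0) :
    ∀ x y : L, ⁅x, J x⁆ = 0 → ⁅y, J y⁆ = 0 → ⁅x, y⁆ = 0 ∧ ⁅x, J y⁆ = 0 := by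
  intro x y _ hy
  exact g.eq_zero_and_eq_zero_of_apply_self_add_apply_self_eq_zero hpos
    (pluriclosed_apply_lie_self_add_apply_lie_apply_self_eq_zero J hJ2 hab g hpc hy)

/-- With an abelian complex structure and a J-invariant pluriclosed
inner product, if `[x,Jx] = 0` and `[y,Jy] = 0` then `[x,y] = 0` and `[x,Jy] = 0`. -/
theorem bracket_vanishing_of_degenerate
    {L : Type*} [LieRing L] [LieAlgebra ℝ L]
    (J : L →ₗ[ℝ] L)
    (hJ2 : ∀ x : L, J (J x) = -x)
    (hab : ∀ x y : L, ⁅J x, J y⁆ = ⁅x, y⁆)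
    (g : L →ₗ[ℝ] L →ₗ[ℝ] ℝ)
    (hsymm : ∀ x y : L, g x y = g y x)
    (hpos : ∀ x : L, x ≠ 0 → 0 < g x x)
    (hJinv : ∀ x y : L, g (J x) (J y) = g x y)
    (hpc : ∀ x y z w : L, g ⁅y, z⁆ ⁅w, x⁆ - g ⁅x, z⁆ ⁅w, y⁆ + g ⁅x, y⁆ ⁅w, z⁆ = 0) :
    ∀ x y : L, ⁅x, J x⁆ = 0 → ⁅y, J y⁆ = 0 → ⁅x, y⁆ = 0 ∧ ⁅x, J y⁆ = 0 :=
  bracket_vanishing_of_degenerate_general J hJ2 hab g hpos hpc
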